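/- Let q be a prime. For every integer n, sin(2πn/q) = (√q/(q-1))·Σ_{χ mod q, χ odd} ε̄_χ·χ(n), where ε_χ is the normalized Gauss sum of the odd Dirichlet character χ mod q. -/

import Mathlib

open Complex Finset
open scoped Classical

/-- The normalized Gauss sum (root number) of an odd Dirichlet character mod `q`:
`ε_χ = (∑_{a mod q} χ(a) e^{2πia/q}) / (i√q)`. -/
noncomputable def rootNumberOdd {q : ℕ} [NeZero q] (χ : DirichletCharacter ℂ q) : ℂ :=
  (∑ a : ZMod q, χ a * Complex.exp (2 * Real.pi * Complex.I * (a.val : ℂ) / q)) /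
    (Complex.I * Real.sqrt q)

/-! Write `ψ = e(·/q)`. Then `ε̄_χ = i τ(χ⁻¹, ψ⁻¹) / √q`. Expanding the Gauss sum, the factor
`(1 - χ(-1))/2` projecting onto odd characters and the orthogonality of characters leave only
the terms `a = ±n`, each with weight `±(q - 1)/2`, so the character sum collapses to
`(q - 1)/2 · (e(-n/q) - e(n/q)) = (q - 1)/(2i) · 2 sin(2πn/q)` (and to `0` when `q ∣ n`). -/

namespace DirichletCharacter

variable {R : Type*} [CommRing R] [IsDomain R] {n : ℕ}

lemma two_mul_sum_odd (f : DirichletCharacter R n → R) :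
    2 * ∑ χ ∈ univ.filter Odd, f χ = ∑ χ, (1 - χ (-1)) * f χ := by
  rw [← sum_filter_add_sum_filter_not univ Odd, mul_sum]
  have h_even : ∀ χ ∈ univ.filter (¬ Odd ·), (1 - χ (-1)) * f χ = 0 := fun χ hχ ↦ by
    rw [χ.even_or_odd.resolve_right (mem_filter.mp hχ).2, sub_self, zero_mul]
  rw [sum_eq_zero h_even, add_zero]
  refine sum_congr rfl fun χ hχ ↦ ?_
  rw [(mem_filter.mp hχ).2, sub_neg_eq_add, one_add_one_eq_two]

variable [NeZero n] [HasEnoughRootsOfUnity R (Monoid.exponent (ZMod n)ˣ)]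

lemma sum_inv_apply_mul_apply {b : ZMod n} (hb : IsUnit b) (a : ZMod n) :
    ∑ χ : DirichletCharacter R n, χ⁻¹ a * χ b = if a = b then (n.totient : R) else 0 := by
  by_cases ha : IsUnit a
  · obtain ⟨u, rfl⟩ := ha
    simp only [MulChar.inv_apply, Ring.inverse_unit, ← ZMod.inv_coe_unit]
    exact sum_char_inv_mul_char_eq R u.isUnit b
  · rw [if_neg (by rintro rfl; exact ha hb)]
    exact sum_eq_zero fun χ _ ↦ by rw [MulChar.map_nonunit _ ha, zero_mul]

lemma two_mul_sum_odd_inv_apply_mul_apply {b : ZMod n} (hb : IsUnit b) (a : ZMod n) :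
    2 * ∑ χ ∈ univ.filter (Odd (S := R)), χ⁻¹ a * χ b =
      (if a = b then (n.totient : R) else 0) - if a = -b then (n.totient : R) else 0 := by
  have h_odd_part : ∀ χ : DirichletCharacter R n,
      (1 - χ (-1)) * (χ⁻¹ a * χ b) = χ⁻¹ a * χ b - χ⁻¹ a * χ (-b) := fun χ ↦ by
    rw [neg_eq_neg_one_mul b, map_mul]
    ring
  rw [two_mul_sum_odd, sum_congr rfl fun χ _ ↦ h_odd_part χ, sum_sub_distrib,
    sum_inv_apply_mul_apply hb, sum_inv_apply_mul_apply hb.neg]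

lemma two_mul_sum_odd_gaussSum_inv_mul_apply (ψ : AddChar (ZMod n) R) {b : ZMod n}
    (hb : IsUnit b) :
    2 * ∑ χ ∈ univ.filter (Odd (S := R)), gaussSum χ⁻¹ ψ * χ b =
      n.totient * (ψ b - ψ (-b)) := by
  calc 2 * ∑ χ ∈ univ.filter (Odd (S := R)), gaussSum χ⁻¹ ψ * χ b
      = ∑ a, (2 * ∑ χ ∈ univ.filter (Odd (S := R)), χ⁻¹ a * χ b) * ψ a := by
        simp only [gaussSum, sum_mul, mul_sum]
        rw [sum_comm]
        exact sum_congr rfl fun _ _ ↦ sum_congr rfl fun _ _ ↦ by ring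
    _ = n.totient * (ψ b - ψ (-b)) := by
        simp only [two_mul_sum_odd_inv_apply_mul_apply hb, sub_mul, ite_mul, zero_mul,
          sum_sub_distrib, sum_ite_eq', mem_univ, if_true, mul_sub]

lemma two_mul_sum_odd_gaussSum_inv_mul_apply_of_prime {p : ℕ} [Fact p.Prime]
    [HasEnoughRootsOfUnity R (Monoid.exponent (ZMod p)ˣ)] (ψ : AddChar (ZMod p) R)
    (b : ZMod p) :
    2 * ∑ χ ∈ univ.filter (Odd (S := R)), gaussSum χ⁻¹ ψ * χ b =
      (p - 1) * (ψ b - ψ (-b)) := by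
  rcases eq_or_ne b 0 with rfl | hb
  · simp only [MulChar.map_zero, mul_zero, sum_const_zero, neg_zero, sub_self]
  · rw [two_mul_sum_odd_gaussSum_inv_mul_apply ψ hb.isUnit, Nat.totient_prime Fact.out,
      Nat.cast_sub (Fact.out : p.Prime).one_le, Nat.cast_one]

end DirichletCharacter

lemma rootNumberOdd_eq_gaussSum {q : ℕ} [NeZero q] (χ : DirichletCharacter ℂ q) :
    rootNumberOdd χ = gaussSum χ ZMod.stdAddChar / (I * Real.sqrt q) := by
  simp only [rootNumberOdd, gaussSum, ZMod.stdAddChar_apply, ZMod.toCircle_apply]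

lemma conj_rootNumberOdd {q : ℕ} [NeZero q] (χ : DirichletCharacter ℂ q) :
    starRingEnd ℂ (rootNumberOdd χ) = I * gaussSum χ⁻¹ ZMod.stdAddChar⁻¹ / Real.sqrt q := by
  rw [rootNumberOdd_eq_gaussSum, map_div₀, starRingEnd_apply, star_gaussSum_eq, map_mul,
    conj_I, conj_ofReal, div_mul_eq_div_div, div_neg, div_I, neg_neg, mul_comm]

lemma stdAddChar_neg_sub_stdAddChar_mul_I (q : ℕ) [NeZero q] (n : ℤ) :
    (ZMod.stdAddChar (-(n : ZMod q)) - ZMod.stdAddChar (n : ZMod q)) * I =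
      2 * Real.sin (2 * Real.pi * n / q) := by
  rw [← Int.cast_neg, ZMod.stdAddChar_coe, ZMod.stdAddChar_coe, ofReal_sin, two_sin]
  push_cast
  ring_nf

/-- for prime `q` and any integer `n`,
`sin(2πn/q) = (√q/(q-1))·∑_{χ odd} ε̄_χ χ(n)`. -/
theorem sin_eq_char_expansion (q : ℕ) [NeZero q] (hq : q.Prime) (n : ℤ) :
    (Real.sin (2 * Real.pi * (n : ℝ) / q) : ℂ) =
      (Real.sqrt q : ℂ) / ((q : ℂ) - 1) *
        ∑ χ ∈ Finset.univ.filter (fun χ : DirichletCharacter ℂ q => χ.Odd),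
          (starRingEnd ℂ) (rootNumberOdd χ) * χ (n : ZMod q) := by
  have : Fact q.Prime := ⟨hq⟩
  have hq1 : (q : ℂ) - 1 ≠ 0 := sub_ne_zero.mpr (by exact_mod_cast hq.ne_one)
  have hsqrt : (Real.sqrt q : ℂ) ≠ 0 :=
    ofReal_ne_zero.mpr (Real.sqrt_ne_zero'.mpr (Nat.cast_pos.mpr hq.pos))
  set ψ : AddChar (ZMod q) ℂ := ZMod.stdAddChar
  calc (Real.sin (2 * Real.pi * (n : ℝ) / q) : ℂ)
      = (ψ (-(n : ZMod q)) - ψ n) * I / 2 := by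
        rw [stdAddChar_neg_sub_stdAddChar_mul_I]; ring
    _ = I / (2 * ((q : ℂ) - 1)) *
          (2 * ∑ χ ∈ univ.filter (DirichletCharacter.Odd (S := ℂ)), gaussSum χ⁻¹ ψ⁻¹ * χ n) := by
        rw [DirichletCharacter.two_mul_sum_odd_gaussSum_inv_mul_apply_of_prime, AddChar.inv_apply,
          AddChar.inv_apply, neg_neg]
        field_simp
    _ = _ := by
        simp only [conj_rootNumberOdd, mul_sum]
        refine sum_congr rfl fun χ _ ↦ ?_
        field_simp
        ring
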